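/- Let p, q ∈ ℂ^{n+1} be nonzero with 0 < d(p,q) < π/2, and let z ∈ ℂ^{n+1} be nonzero. Then (|z·ᾱ| + |z·β̄|)/(√2·|z|) ∈ [0,1] and the distance from z to the geodesic through p and q satisfies inf_{t ∈ ℝ} d(z, γ_t(p,q)) = arccos( (|z·ᾱ| + |z·β̄|)/(√2·|z|) ). -/

import Mathlib

noncomputable section

/-- Hermitian product `w·z̄ = Σᵢ wⁱ·conj(zⁱ)` on `ℂ^m`. -/
def herm {m : ℕ} (w z : EuclideanSpace ℂ (Fin m)) : ℂ :=
  ∑ i, w i * (starRingEnd ℂ) (z i)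

/-- Fubini–Study distance between (the projective classes of) `p` and `q`. -/
def fsDist {m : ℕ} (p q : EuclideanSpace ℂ (Fin m)) : ℝ :=
  Real.arccos (‖herm p q‖ / (‖p‖ * ‖q‖))

/-- Initial velocity `γ₀'(p,q)` of the geodesic from `[p]` to `[q]`. -/
def gammaDir {m : ℕ} (p q : EuclideanSpace ℂ (Fin m)) : EuclideanSpace ℂ (Fin m) :=
  (Real.cot (fsDist p q) : ℂ) • (((‖p‖ : ℂ) / herm q p) • q - (‖p‖ : ℂ)⁻¹ • p)

/-- The geodesic `γ_t(p,q) = cos t·(p/|p|) + sin t·γ₀'(p,q)`. -/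
def geo {m : ℕ} (t : ℝ) (p q : EuclideanSpace ℂ (Fin m)) : EuclideanSpace ℂ (Fin m) :=
  (Real.cos t : ℂ) • ((‖p‖ : ℂ)⁻¹ • p) + (Real.sin t : ℂ) • gammaDir p q

/-- The velocity `γ_t'(p,q) = −sin t·(p/|p|) + cos t·γ₀'(p,q)`. -/
def geoVel {m : ℕ} (t : ℝ) (p q : EuclideanSpace ℂ (Fin m)) : EuclideanSpace ℂ (Fin m) :=
  (-(Real.sin t) : ℂ) • ((‖p‖ : ℂ)⁻¹ • p) + (Real.cos t : ℂ) • gammaDir p q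

/-- `α = (p/|p| + i·γ₀'(p,q))/√2`. -/
def alphaV {m : ℕ} (p q : EuclideanSpace ℂ (Fin m)) : EuclideanSpace ℂ (Fin m) :=
  ((Real.sqrt 2 : ℂ))⁻¹ • ((‖p‖ : ℂ)⁻¹ • p + Complex.I • gammaDir p q)

/-- `β = (p/|p| − i·γ₀'(p,q))/√2`. -/
def betaV {m : ℕ} (p q : EuclideanSpace ℂ (Fin m)) : EuclideanSpace ℂ (Fin m) :=
  ((Real.sqrt 2 : ℂ))⁻¹ • ((‖p‖ : ℂ)⁻¹ • p - Complex.I • gammaDir p q)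

/-!
With `u = p/|p|` and `v = γ₀'(p,q)`, the pair `(u, v)` is orthonormal: `v` is `cot d` times the
component orthogonal to `u` of `q/⟨u,q⟩`, and that component has length `tan d`. Hence `γ_t` is a
unit vector and `d(z, γ_t) = arccos (|⟨γ_t, z⟩| / |z|)`. Writing `cos t` and `sin t` through
`e^{±it}` gives `√2 ⟨γ_t, z⟩ = e^{it} ⟨α, z⟩ + e^{-it} ⟨β, z⟩`, whose modulus is at most
`|⟨α, z⟩| + |⟨β, z⟩|`, with equality for the `t` that aligns the arguments of the two terms.
As `arccos` is decreasing, the infimum of the distances is attained at that `t`.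
-/

open scoped InnerProductSpace

lemma Complex.exp_ofReal_mul_I_mul (s : ℝ) (C : ℂ) :
    Complex.exp (s * Complex.I) * C = ‖C‖ * Complex.exp ((s + C.arg : ℝ) * Complex.I) := by
  conv_lhs => rw [← Complex.norm_mul_exp_arg_mul_I C]
  rw [mul_left_comm, ← Complex.exp_add]
  push_cast
  ring_nf

lemma isGreatest_norm_exp_mul_add_exp_neg_mul (A B : ℂ) :
    IsGreatest (Set.range fun t : ℝ =>
      ‖Complex.exp (t * Complex.I) * A + Complex.exp (-t * Complex.I) * B‖) (‖A‖ + ‖B‖) := by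
  refine ⟨⟨(B.arg - A.arg) / 2, ?_⟩, ?_⟩
  · -- both summands then have argument `(arg A + arg B) / 2`
    dsimp only
    rw [← Complex.ofReal_neg, Complex.exp_ofReal_mul_I_mul, Complex.exp_ofReal_mul_I_mul,
      show (B.arg - A.arg) / 2 + A.arg = (A.arg + B.arg) / 2 by ring,
      show -((B.arg - A.arg) / 2) + B.arg = (A.arg + B.arg) / 2 by ring, ← add_mul, norm_mul,
      Complex.norm_exp_ofReal_mul_I, mul_one]
    norm_cast
    exact Real.norm_of_nonneg (by positivity)
  · rintro _ ⟨t, rfl⟩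
    refine (norm_add_le _ _).trans_eq ?_
    simp [Complex.norm_exp]

section ComplexInnerProductSpace

variable {E : Type*} [NormedAddCommGroup E] [InnerProductSpace ℂ E]

lemma norm_cos_smul_add_sin_smul {u v : E} (hu : ‖u‖ = 1) (hv : ‖v‖ = 1) (huv : ⟪u, v⟫_ℂ = 0)
    (t : ℝ) : ‖(Real.cos t : ℂ) • u + (Real.sin t : ℂ) • v‖ = 1 := by
  have hperp : ⟪(Real.cos t : ℂ) • u, (Real.sin t : ℂ) • v⟫_ℂ = 0 := by
    simp [huv]
  have h := norm_add_sq_eq_norm_sq_add_norm_sq_of_inner_eq_zero _ _ hperp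
  simp only [norm_smul, Complex.norm_real, Real.norm_eq_abs, hu, hv, mul_one, ← sq, sq_abs,
    Real.cos_sq_add_sin_sq] at h
  exact (pow_eq_one_iff_of_nonneg (norm_nonneg _) two_ne_zero).mp h

lemma inner_inv_inner_smul_sub {u q : E} (hu : ‖u‖ = 1) (huq : ⟪u, q⟫_ℂ ≠ 0) :
    ⟪u, (⟪u, q⟫_ℂ)⁻¹ • q - u⟫_ℂ = 0 := by
  rw [inner_sub_right, inner_smul_right, inv_mul_cancel₀ huq, inner_self_eq_norm_sq_to_K, hu]
  simp

lemma norm_inv_inner_smul_sub_sq {u q : E} (hu : ‖u‖ = 1) (huq : ⟪u, q⟫_ℂ ≠ 0) :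
    ‖(⟪u, q⟫_ℂ)⁻¹ • q - u‖ ^ 2 = (‖q‖ / ‖⟪u, q⟫_ℂ‖) ^ 2 - 1 := by
  have h := norm_add_sq_eq_norm_sq_add_norm_sq_of_inner_eq_zero _ _ (inner_inv_inner_smul_sub hu huq)
  rw [add_sub_cancel, norm_smul, norm_inv, hu] at h
  rw [div_eq_inv_mul]
  linear_combination -h

lemma inner_cos_smul_add_sin_smul (u v z : E) (t : ℝ) :
    ⟪(Real.cos t : ℂ) • u + (Real.sin t : ℂ) • v, z⟫_ℂ =
      (Complex.exp (t * Complex.I) * ⟪u + Complex.I • v, z⟫_ℂ +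
        Complex.exp (-t * Complex.I) * ⟪u - Complex.I • v, z⟫_ℂ) / 2 := by
  simp only [inner_add_left, inner_sub_left, inner_smul_left, Complex.conj_ofReal,
    Complex.conj_I, Complex.exp_mul_I, Complex.cos_neg, Complex.sin_neg,
    ← Complex.ofReal_cos, ← Complex.ofReal_sin]
  linear_combination ((Real.sin t : ℂ) * ⟪v, z⟫_ℂ) * Complex.I_sq

lemma isGreatest_norm_inner_cos_smul_add_sin_smul (u v z : E) :
    IsGreatest (Set.range fun t : ℝ => ‖⟪(Real.cos t : ℂ) • u + (Real.sin t : ℂ) • v, z⟫_ℂ‖)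
      ((‖⟪(Real.sqrt 2 : ℂ)⁻¹ • (u + Complex.I • v), z⟫_ℂ‖ +
        ‖⟪(Real.sqrt 2 : ℂ)⁻¹ • (u - Complex.I • v), z⟫_ℂ‖) / Real.sqrt 2) := by
  have hf : (fun t : ℝ => ‖⟪(Real.cos t : ℂ) • u + (Real.sin t : ℂ) • v, z⟫_ℂ‖) =
      (· / 2) ∘ fun t : ℝ => ‖Complex.exp (t * Complex.I) * ⟪u + Complex.I • v, z⟫_ℂ +
        Complex.exp (-t * Complex.I) * ⟪u - Complex.I • v, z⟫_ℂ‖ := by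
    funext t
    simp only [Function.comp, inner_cos_smul_add_sin_smul, norm_div, Complex.norm_two]
  have hM : (‖⟪(Real.sqrt 2 : ℂ)⁻¹ • (u + Complex.I • v), z⟫_ℂ‖ +
      ‖⟪(Real.sqrt 2 : ℂ)⁻¹ • (u - Complex.I • v), z⟫_ℂ‖) / Real.sqrt 2 =
      (‖⟪u + Complex.I • v, z⟫_ℂ‖ + ‖⟪u - Complex.I • v, z⟫_ℂ‖) / 2 := by
    simp only [inner_smul_left, map_inv₀, Complex.conj_ofReal, norm_mul, norm_inv,
      Complex.norm_real, Real.norm_of_nonneg (Real.sqrt_nonneg 2)]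
    field_simp
    rw [Real.sq_sqrt zero_le_two, mul_comm]
  rw [hf, Set.range_comp, hM]
  exact (monotone_div_right_of_nonneg zero_le_two).map_isGreatest
    (isGreatest_norm_exp_mul_add_exp_neg_mul _ _)

end ComplexInnerProductSpace

section FubiniStudy

variable {m : ℕ}

lemma herm_eq_inner (w z : EuclideanSpace ℂ (Fin m)) : herm w z = ⟪z, w⟫_ℂ := by
  simp [herm, PiLp.inner_apply]

lemma norm_herm_comm (w z : EuclideanSpace ℂ (Fin m)) : ‖herm w z‖ = ‖herm z w‖ := by
  rw [herm_eq_inner, herm_eq_inner, ← inner_conj_symm, Complex.norm_conj]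

lemma norm_herm_le (w z : EuclideanSpace ℂ (Fin m)) : ‖herm w z‖ ≤ ‖w‖ * ‖z‖ := by
  rw [herm_eq_inner, mul_comm]
  exact norm_inner_le_norm z w

lemma cos_fsDist (p q : EuclideanSpace ℂ (Fin m)) :
    Real.cos (fsDist p q) = ‖herm p q‖ / (‖p‖ * ‖q‖) :=
  Real.cos_arccos (by linarith [show 0 ≤ ‖herm p q‖ / (‖p‖ * ‖q‖) by positivity])
    (div_le_one_of_le₀ (norm_herm_le p q) (by positivity))

lemma herm_ne_zero_of_fsDist_lt {p q : EuclideanSpace ℂ (Fin m)} (h : fsDist p q < Real.pi / 2) :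
    herm q p ≠ 0 := by
  intro h0
  rw [fsDist, norm_herm_comm, h0, norm_zero, zero_div, Real.arccos_zero] at h
  exact lt_irrefl _ h

lemma inner_normalize_left (p q : EuclideanSpace ℂ (Fin m)) :
    ⟪(‖p‖ : ℂ)⁻¹ • p, q⟫_ℂ = (‖p‖ : ℂ)⁻¹ * herm q p := by
  rw [inner_smul_left, map_inv₀, Complex.conj_ofReal, herm_eq_inner]

lemma gammaDir_eq (p q : EuclideanSpace ℂ (Fin m)) :
    gammaDir p q = (Real.cot (fsDist p q) : ℂ) •
      ((⟪(‖p‖ : ℂ)⁻¹ • p, q⟫_ℂ)⁻¹ • q - (‖p‖ : ℂ)⁻¹ • p) := by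
  rw [inner_normalize_left, mul_inv, inv_inv, ← div_eq_mul_inv]
  rfl

lemma inner_normalize_ne_zero {p q : EuclideanSpace ℂ (Fin m)} (hp : p ≠ 0)
    (hd : fsDist p q < Real.pi / 2) : ⟪(‖p‖ : ℂ)⁻¹ • p, q⟫_ℂ ≠ 0 := by
  rw [inner_normalize_left]
  exact mul_ne_zero (by simpa using hp) (herm_ne_zero_of_fsDist_lt hd)

lemma inner_normalize_gammaDir {p q : EuclideanSpace ℂ (Fin m)} (hp : p ≠ 0)
    (hd : fsDist p q < Real.pi / 2) : ⟪(‖p‖ : ℂ)⁻¹ • p, gammaDir p q⟫_ℂ = 0 := by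
  rw [gammaDir_eq, inner_smul_right]
  exact mul_eq_zero_of_right _
    (inner_inv_inner_smul_sub (norm_smul_inv_norm hp) (inner_normalize_ne_zero hp hd))

lemma norm_gammaDir {p q : EuclideanSpace ℂ (Fin m)} (hp : p ≠ 0)
    (hd0 : 0 < fsDist p q) (hd2 : fsDist p q < Real.pi / 2) : ‖gammaDir p q‖ = 1 := by
  rw [gammaDir_eq, norm_smul, Complex.norm_real, Real.cot_eq_cos_div_sin]
  set d := fsDist p q
  have hcos : 0 < Real.cos d := Real.cos_pos_of_mem_Ioo ⟨by linarith [Real.pi_pos], hd2⟩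
  have hsin : 0 < Real.sin d := Real.sin_pos_of_pos_of_lt_pi hd0 (by linarith [Real.pi_pos])
  have hne := inner_normalize_ne_zero hp hd2
  have hratio : ‖q‖ / ‖⟪(‖p‖ : ℂ)⁻¹ • p, q⟫_ℂ‖ = (Real.cos d)⁻¹ := by
    have hherm : ‖herm p q‖ ≠ 0 := by
      rw [norm_herm_comm]
      exact norm_ne_zero_iff.mpr (herm_ne_zero_of_fsDist_lt hd2)
    rw [cos_fsDist, inner_normalize_left, norm_mul, norm_inv, Complex.norm_real, norm_norm,
      norm_herm_comm q p]
    field_simp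
  have hw : ‖(⟪(‖p‖ : ℂ)⁻¹ • p, q⟫_ℂ)⁻¹ • q - (‖p‖ : ℂ)⁻¹ • p‖ = Real.sin d / Real.cos d := by
    rw [← sq_eq_sq₀ (norm_nonneg _) (by positivity)]
    refine (norm_inv_inner_smul_sub_sq (norm_smul_inv_norm hp) hne).trans ?_
    erw [hratio]
    field_simp
    linear_combination -Real.sin_sq_add_cos_sq d
  rw [hw, Real.norm_of_nonneg (by positivity)]
  field_simp

end FubiniStudy

theorem stmt9_general {n : ℕ} (p q : EuclideanSpace ℂ (Fin (n + 1))) (hp : p ≠ 0)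
    (hd0 : 0 < fsDist p q) (hd2 : fsDist p q < Real.pi / 2)
    (z : EuclideanSpace ℂ (Fin (n + 1))) :
    (0 ≤ (‖herm z (alphaV p q)‖ + ‖herm z (betaV p q)‖) /
        (Real.sqrt 2 * ‖z‖) ∧
      (‖herm z (alphaV p q)‖ + ‖herm z (betaV p q)‖) /
        (Real.sqrt 2 * ‖z‖) ≤ 1) ∧
    (⨅ t : ℝ, fsDist z (geo t p q)) =
      Real.arccos ((‖herm z (alphaV p q)‖ + ‖herm z (betaV p q)‖) /
        (Real.sqrt 2 * ‖z‖)) := by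
  have hgeo (t : ℝ) : ‖geo t p q‖ = 1 :=
    norm_cos_smul_add_sin_smul (norm_smul_inv_norm hp) (norm_gammaDir hp hd0 hd2)
      (inner_normalize_gammaDir hp hd2) t
  have hmax : IsGreatest (Set.range fun t => ‖herm z (geo t p q)‖ / ‖z‖)
      ((‖herm z (alphaV p q)‖ + ‖herm z (betaV p q)‖) / (Real.sqrt 2 * ‖z‖)) := by
    have h := (monotone_div_right_of_nonneg (norm_nonneg z)).map_isGreatest
      (isGreatest_norm_inner_cos_smul_add_sin_smul ((‖p‖ : ℂ)⁻¹ • p) (gammaDir p q) z)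
    rw [← Set.range_comp, div_div] at h
    simp only [herm_eq_inner]
    exact h
  have hfs (t : ℝ) : fsDist z (geo t p q) = Real.arccos (‖herm z (geo t p q)‖ / ‖z‖) := by
    rw [fsDist, hgeo, mul_one]
  refine ⟨⟨by positivity, ?_⟩, ?_⟩
  · obtain ⟨⟨t, ht⟩, -⟩ := hmax
    rw [← ht]
    exact div_le_one_of_le₀ ((norm_herm_le z _).trans_eq (by rw [hgeo, mul_one])) (norm_nonneg z)
  · have hmin := Real.antitone_arccos.map_isGreatest hmax
    rw [← Set.range_comp] at hmin
    simp only [hfs]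
    exact hmin.isGLB.ciInf_eq

theorem stmt9 {n : ℕ} (p q : EuclideanSpace ℂ (Fin (n + 1))) (hp : p ≠ 0) (hq : q ≠ 0)
    (hd0 : 0 < fsDist p q) (hd2 : fsDist p q < Real.pi / 2)
    (z : EuclideanSpace ℂ (Fin (n + 1))) (hz : z ≠ 0) :
    (0 ≤ (‖herm z (alphaV p q)‖ + ‖herm z (betaV p q)‖) /
        (Real.sqrt 2 * ‖z‖) ∧
      (‖herm z (alphaV p q)‖ + ‖herm z (betaV p q)‖) /
        (Real.sqrt 2 * ‖z‖) ≤ 1) ∧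
    (⨅ t : ℝ, fsDist z (geo t p q)) =
      Real.arccos ((‖herm z (alphaV p q)‖ + ‖herm z (betaV p q)‖) /
        (Real.sqrt 2 * ‖z‖)) :=
  stmt9_general p q hp hd0 hd2 z
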